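/- arXiv:2312.08689 — 4 statements merged into one kernel-verified Lean document; each statement's English description precedes it below -/
import Mathlib

section
/- Let α : ℝ → ℝ be locally Lipschitz, strictly increasing, and satisfy α(0) = 0 (an extended class-K∞ function). Let h : [0, ∞) → ℝ be differentiable with h'(t) ≥ -α(h(t)) for all t ≥ 0. If h(0) ≥ 0, then h(t) ≥ 0 for all t ≥ 0. -/
/-- Comparison lemma for the CBF condition with a general extended class-`K∞` rate:
if `α` is locally Lipschitz, strictly increasing, with `α 0 = 0`, `h` is differentiable on
`[0, ∞)` with `h' t ≥ -α (h t)` there, and `h 0 ≥ 0`, then `h t ≥ 0` for all `t ≥ 0`. -/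
theorem cbf_classK_comparison (α : ℝ → ℝ) (hα : LocallyLipschitz α)
    (hmono : StrictMono α) (hα0 : α 0 = 0)
    (h h' : ℝ → ℝ)
    (hderiv : ∀ t ≥ (0 : ℝ), HasDerivAt h (h' t) t)
    (hineq : ∀ t ≥ (0 : ℝ), h' t ≥ -α (h t))
    (hinit : h 0 ≥ 0) :
    ∀ t ≥ (0 : ℝ), h t ≥ 0 := by
  intro t ht
  by_contra hneg
  push_neg at hneg
  have hcont : ContinuousOn h (Set.Icc 0 t) := fun x hx =>
    ((hderiv x hx.1).continuousAt).continuousWithinAt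
  set S : Set ℝ := Set.Icc 0 t ∩ h ⁻¹' Set.Ici 0 with hS
  have h0S : (0 : ℝ) ∈ S := ⟨⟨le_refl 0, ht⟩, hinit⟩
  have hSclosed : IsClosed S :=
    hcont.preimage_isClosed_of_isClosed isClosed_Icc isClosed_Ici
  have hScompact : IsCompact S :=
    (isCompact_Icc : IsCompact (Set.Icc (0:ℝ) t)).of_isClosed_subset hSclosed
      Set.inter_subset_left
  have hSne : S.Nonempty := ⟨0, h0S⟩
  obtain ⟨ht0mem⟩ : ∃ _ : sSup S ∈ S, True := ⟨hScompact.sSup_mem hSne, trivial⟩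
  set t₀ := sSup S with ht0
  have ht₀Icc : t₀ ∈ Set.Icc 0 t := ht0mem.1
  have ht₀h : 0 ≤ h t₀ := ht0mem.2
  have ht₀lt : t₀ < t := by
    rcases lt_or_eq_of_le ht₀Icc.2 with h1 | h1
    · exact h1
    · exfalso; rw [h1] at ht₀h; linarith
  -- on (t₀, t], h is negative
  have hnegmid : ∀ s, t₀ < s → s ≤ t → h s < 0 := by
    intro s hs1 hs2
    by_contra hc
    push_neg at hc
    have : s ∈ S := ⟨⟨le_trans ht₀Icc.1 hs1.le, hs2⟩, hc⟩
    have := le_csSup hScompact.bddAbove this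
    linarith
  -- h is strictly monotone on [t₀, t]
  have hmonoOn : StrictMonoOn h (Set.Icc t₀ t) := by
    apply strictMonoOn_of_deriv_pos (convex_Icc t₀ t)
    · exact hcont.mono (Set.Icc_subset_Icc ht₀Icc.1 le_rfl)
    · intro x hx
      rw [interior_Icc] at hx
      have hx0 : 0 ≤ x := le_trans ht₀Icc.1 hx.1.le
      rw [(hderiv x hx0).deriv]
      have hhx : h x < 0 := hnegmid x hx.1 hx.2.le
      have : α (h x) < 0 := by
        have := hmono hhx
        rwa [hα0] at this
      have := hineq x hx0
      linarith
  have := hmonoOn ⟨le_rfl, ht₀lt.le⟩ ⟨ht₀lt.le, le_rfl⟩ ht₀lt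
  linarith
end

section
/- Let F : ℝⁿ → ℝⁿ be Lipschitz continuous, let h : ℝⁿ → ℝ be continuously differentiable, and let a > 0 be such that ⟨∇h(x), F(x)⟩ ≥ -a·h(x) for all x ∈ ℝⁿ. Then for every solution x : [0, ∞) → ℝⁿ of the ODE ẋ = F(x) with h(x(0)) ≥ 0, one has h(x(t)) ≥ 0 for all t ≥ 0; that is, the safe set S = {x ∈ ℝⁿ : h(x) ≥ 0} is forward invariant along the closed-loop system. -/
/-!
Along a solution, `y t = h (x t)` satisfies the differential inequality `y' ≥ -a y`.
Multiplying by the integrating factor `exp (a t)` turns it into `(exp (a t) y)' ≥ 0`,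
so `exp (a t) y t` is nondecreasing and keeps the sign of `y 0 ≥ 0`.
-/

open Real Set

theorem HasGradientAt.comp_hasDerivAt {E : Type*} [NormedAddCommGroup E] [InnerProductSpace ℝ E]
    [CompleteSpace E] {f : E → ℝ} {f' : E} {γ : ℝ → E} {γ' : E} {t : ℝ}
    (hf : HasGradientAt f f' (γ t)) (hγ : HasDerivAt γ γ' t) :
    HasDerivAt (fun s => f (γ s)) (inner ℝ f' γ') t := by
  simpa [Function.comp_def] using hf.hasFDerivAt.comp_hasDerivAt t hγ

theorem monotoneOn_exp_mul_of_hasDerivAt_ge_neg_mul {y y' : ℝ → ℝ} {D : Set ℝ} (a : ℝ)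
    (hD : Convex ℝ D) (hy : ∀ t ∈ D, HasDerivAt y (y' t) t)
    (hy' : ∀ t ∈ D, -a * y t ≤ y' t) :
    MonotoneOn (fun t => exp (a * t) * y t) D := by
  have hderiv : ∀ t ∈ D, HasDerivAt (fun t => exp (a * t) * y t)
      (exp (a * t) * (a * y t + y' t)) t := fun t ht => by
    have hexp : HasDerivAt (fun t => exp (a * t)) (exp (a * t) * a) t :=
      (hasDerivAt_const_mul a).exp
    exact (hexp.mul (hy t ht)).congr_deriv (by ring)
  refine monotoneOn_of_hasDerivWithinAt_nonneg hD
    (fun t ht => (hderiv t ht).continuousAt.continuousWithinAt)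
    (fun t ht => (hderiv t (interior_subset ht)).hasDerivWithinAt) fun t ht => ?_
  have hbound := hy' t (interior_subset ht)
  exact mul_nonneg (exp_pos _).le (by linarith)

theorem nonneg_of_hasDerivAt_ge_neg_mul {y y' : ℝ → ℝ} {t₀ : ℝ} (a : ℝ)
    (hy : ∀ t ≥ t₀, HasDerivAt y (y' t) t) (hy' : ∀ t ≥ t₀, -a * y t ≤ y' t)
    (h₀ : 0 ≤ y t₀) : ∀ t ≥ t₀, 0 ≤ y t := by
  intro t ht
  have hgrowth := monotoneOn_exp_mul_of_hasDerivAt_ge_neg_mul a (convex_Ici t₀) hy hy'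
    self_mem_Ici ht ht
  have hweighted : 0 ≤ exp (a * t) * y t := (mul_nonneg (exp_pos _).le h₀).trans hgrowth
  exact nonneg_of_mul_nonneg_right hweighted (exp_pos _)

theorem cbf_safe_set_forward_invariant_general
    (n : ℕ) (F : EuclideanSpace ℝ (Fin n) → EuclideanSpace ℝ (Fin n))
    (h : EuclideanSpace ℝ (Fin n) → ℝ) (hh : ContDiff ℝ 1 h)
    (a : ℝ)
    (hcbf : ∀ x, (inner ℝ (gradient h x) (F x) : ℝ) ≥ -a * h x)
    (x : ℝ → EuclideanSpace ℝ (Fin n))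
    (hsol : ∀ t ≥ (0 : ℝ), HasDerivAt x (F (x t)) t)
    (hinit : h (x 0) ≥ 0) :
    ∀ t ≥ (0 : ℝ), h (x t) ≥ 0 := by
  have hdiff : Differentiable ℝ h := hh.differentiable one_ne_zero
  exact nonneg_of_hasDerivAt_ge_neg_mul a
    (fun t ht => (hdiff (x t)).hasGradientAt.comp_hasDerivAt (hsol t ht))
    (fun t _ => hcbf (x t)) hinit

/-- Safety guarantee of CBF-based controllers (Theorem 1 of the paper, closed-loop form,
with linear class-`K∞` rate `α(s) = a·s`): if `F` is Lipschitz, `h` is `C¹` and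
`⟨∇h x, F x⟩ ≥ -a · h x` for all `x`, then along every solution of `ẋ = F x` starting in
the safe set `S = {x : h x ≥ 0}`, the state remains in `S`, i.e. `S` is forward invariant. -/
theorem cbf_safe_set_forward_invariant
    (n : ℕ) (F : EuclideanSpace ℝ (Fin n) → EuclideanSpace ℝ (Fin n))
    (K : NNReal) (hF : LipschitzWith K F)
    (h : EuclideanSpace ℝ (Fin n) → ℝ) (hh : ContDiff ℝ 1 h)
    (a : ℝ) (ha : 0 < a)
    (hcbf : ∀ x, (inner ℝ (gradient h x) (F x) : ℝ) ≥ -a * h x)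
    (x : ℝ → EuclideanSpace ℝ (Fin n))
    (hsol : ∀ t ≥ (0 : ℝ), HasDerivAt x (F (x t)) t)
    (hinit : h (x 0) ≥ 0) :
    ∀ t ≥ (0 : ℝ), h (x t) ≥ 0 :=
  cbf_safe_set_forward_invariant_general n F h hh a hcbf x hsol hinit
end

section
/- Let α₁, α₂ : ℝ → ℝ be locally Lipschitz, strictly increasing functions with α₁(0) = α₂(0) = 0. Let ψ₀ : [0, ∞) → ℝ be twice continuously differentiable and define ψ₁(t) := ψ₀'(t) + α₁(ψ₀(t)). Suppose ψ₁ is differentiable with ψ₁'(t) + α₂(ψ₁(t)) ≥ 0 for all t ≥ 0, and ψ₀(0) ≥ 0, ψ₁(0) ≥ 0. Then ψ₀(t) ≥ 0 and ψ₁(t) ≥ 0 for all t ≥ 0. -/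
lemma hocbf_key (α : ℝ → ℝ) (hmono : StrictMono α) (h0 : α 0 = 0)
    (f f' : ℝ → ℝ)
    (hd : ∀ t ≥ (0 : ℝ), HasDerivAt f (f' t) t)
    (hineq : ∀ t ≥ (0 : ℝ), f' t + α (f t) ≥ 0)
    (hinit : f 0 ≥ 0) : ∀ t ≥ (0 : ℝ), f t ≥ 0 := by
  intro t₁ ht₁
  by_contra hneg
  push_neg at hneg
  have hcontf : ContinuousOn f (Set.Icc 0 t₁) := fun x hx =>
    ((hd x hx.1).continuousAt).continuousWithinAt
  set S : Set ℝ := Set.Icc 0 t₁ ∩ f ⁻¹' Set.Ici 0 with hS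
  have hSne : S.Nonempty := ⟨0, ⟨le_refl 0, ht₁⟩, hinit⟩
  have hSbdd : BddAbove S := ⟨t₁, fun x hx => hx.1.2⟩
  have hSclosed : IsClosed S :=
    hcontf.preimage_isClosed_of_isClosed isClosed_Icc isClosed_Ici
  set s := sSup S with hs
  have hsS : s ∈ S := hSclosed.csSup_mem hSne hSbdd
  have hfs : f s ≥ 0 := hsS.2
  have hs0 : (0:ℝ) ≤ s := hsS.1.1
  have hst : s ≤ t₁ := hsS.1.2
  have hslt : s < t₁ := hst.lt_of_ne (fun h => (not_le.2 hneg) (h ▸ hfs))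
  have hfneg : ∀ x ∈ Set.Ioc s t₁, f x < 0 := by
    intro x hx
    by_contra h
    push_neg at h
    have : x ∈ S := ⟨⟨hs0.trans hx.1.le, hx.2⟩, h⟩
    exact absurd (le_csSup hSbdd this) (not_le.2 hx.1)
  have hmonoOn : StrictMonoOn f (Set.Icc s t₁) := by
    apply strictMonoOn_of_deriv_pos (convex_Icc s t₁)
      (hcontf.mono (Set.Icc_subset_Icc hs0 le_rfl))
    intro x hx
    rw [interior_Icc] at hx
    have hx0 : (0:ℝ) ≤ x := hs0.trans hx.1.le
    rw [(hd x hx0).deriv]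
    have h1 := hineq x hx0
    have h2 : α (f x) < α 0 := hmono (hfneg x ⟨hx.1, hx.2.le⟩)
    rw [h0] at h2
    linarith
  have := hmonoOn (Set.left_mem_Icc.2 hst) (Set.right_mem_Icc.2 hst) hslt
  linarith

/-- Trajectory-wise HOCBF cascade with general extended class-`K∞` rates (Theorem 2 of the
paper): for locally Lipschitz, strictly increasing `α₁, α₂` with `α₁ 0 = α₂ 0 = 0`, a twice
continuously differentiable `ψ₀` on `[0, ∞)`, and `ψ₁ := ψ₀' + α₁ ∘ ψ₀` differentiable with
`ψ₁' + α₂ ∘ ψ₁ ≥ 0` on `[0, ∞)`, initial conditions `ψ₀ 0 ≥ 0`, `ψ₁ 0 ≥ 0` imply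
`ψ₀ t ≥ 0` and `ψ₁ t ≥ 0` for all `t ≥ 0`. -/
theorem hocbf_classK_cascade (α₁ α₂ : ℝ → ℝ)
    (hα₁lip : LocallyLipschitz α₁) (hα₂lip : LocallyLipschitz α₂)
    (hα₁mono : StrictMono α₁) (hα₂mono : StrictMono α₂)
    (hα₁0 : α₁ 0 = 0) (hα₂0 : α₂ 0 = 0)
    (ψ₀ ψ₀' ψ₀'' : ℝ → ℝ)
    (hd1 : ∀ t ≥ (0 : ℝ), HasDerivAt ψ₀ (ψ₀' t) t)
    (hd2 : ∀ t ≥ (0 : ℝ), HasDerivAt ψ₀' (ψ₀'' t) t)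
    (hcont : ContinuousOn ψ₀'' (Set.Ici (0 : ℝ)))
    (ψ₁ ψ₁' : ℝ → ℝ) (hψ₁ : ∀ t, ψ₁ t = ψ₀' t + α₁ (ψ₀ t))
    (hd3 : ∀ t ≥ (0 : ℝ), HasDerivAt ψ₁ (ψ₁' t) t)
    (hψ₂ : ∀ t ≥ (0 : ℝ), ψ₁' t + α₂ (ψ₁ t) ≥ 0)
    (hinit₀ : ψ₀ 0 ≥ 0) (hinit₁ : ψ₁ 0 ≥ 0) :
    ∀ t ≥ (0 : ℝ), ψ₀ t ≥ 0 ∧ ψ₁ t ≥ 0 := by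
  have h1 : ∀ t ≥ (0:ℝ), ψ₁ t ≥ 0 :=
    hocbf_key α₂ hα₂mono hα₂0 ψ₁ ψ₁' hd3 hψ₂ hinit₁
  have h0 : ∀ t ≥ (0:ℝ), ψ₀ t ≥ 0 := by
    apply hocbf_key α₁ hα₁mono hα₁0 ψ₀ ψ₀' hd1 _ hinit₀
    intro t ht
    have := h1 t ht
    rw [hψ₁ t] at this
    linarith
  exact fun t ht => ⟨h0 t ht, h1 t ht⟩
end

section
/- Let F : ℝⁿ → ℝⁿ be Lipschitz continuous, let ψ₀ : ℝⁿ → ℝ be twice continuously differentiable, let a₁, a₂ > 0, and define ψ₁(x) := ⟨∇ψ₀(x), F(x)⟩ + a₁·ψ₀(x). Suppose ψ₁ is continuously differentiable and ⟨∇ψ₁(x), F(x)⟩ ≥ -a₂·ψ₁(x) for all x ∈ ℝⁿ. Then the set S⁰ ∩ S¹ = {x : ψ₀(x) ≥ 0} ∩ {x : ψ₁(x) ≥ 0} is forward invariant along ẋ = F(x): every solution with ψ₀(x(0)) ≥ 0 and ψ₁(x(0)) ≥ 0 satisfies ψ₀(x(t)) ≥ 0 and ψ₁(x(t)) ≥ 0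 for all t ≥ 0. -/
open Real Set

/-! Each barrier is a first-order CBF along the trajectory: `ψ₁` directly by hypothesis, and then
`ψ₀`, because `d/dt ψ₀(x t) = ψ₁(x t) - a₁ ψ₀(x t) ≥ -a₁ ψ₀(x t)` once `ψ₁ ≥ 0` is known.
A first-order CBF stays nonnegative since `f' ≥ -a f` makes `f(t) e^{a t}` nondecreasing. -/

lemma nonneg_of_hasDerivAt_ge_neg_mul_s5 {a : ℝ} {f f' : ℝ → ℝ}
    (hf : ∀ t ≥ (0 : ℝ), HasDerivAt f (f' t) t) (hf' : ∀ t ≥ (0 : ℝ), -a * f t ≤ f' t)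
    (h0 : 0 ≤ f 0) : ∀ t ≥ (0 : ℝ), 0 ≤ f t := by
  have hderiv : ∀ t ≥ (0 : ℝ),
      HasDerivAt (fun s => f s * exp (a * s)) ((f' t + a * f t) * exp (a * t)) t := by
    intro t ht
    have hexp : HasDerivAt (fun s => exp (a * s)) (exp (a * t) * a) t :=
      ((hasDerivAt_id t).const_mul a).exp.congr_deriv (by simp)
    exact ((hf t ht).mul hexp).congr_deriv (by ring)
  have hmono : MonotoneOn (fun s => f s * exp (a * s)) (Ici 0) := by
    refine monotoneOn_of_hasDerivWithinAt_nonneg (convex_Ici 0)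
      (fun t ht => (hderiv t ht).continuousAt.continuousWithinAt)
      (fun t ht => (hderiv t (interior_subset ht)).hasDerivWithinAt) (fun t ht => ?_)
    have : 0 ≤ f' t + a * f t := by linarith [hf' t (interior_subset ht)]
    positivity
  intro t ht
  have hweighted : 0 ≤ f t * exp (a * t) := by
    simpa using le_trans (by simpa using h0) (hmono self_mem_Ici ht ht)
  exact nonneg_of_mul_nonneg_left hweighted (exp_pos _)

section Trajectory

variable {E : Type*} [NormedAddCommGroup E] [InnerProductSpace ℝ E] [CompleteSpace E]

lemma hasDerivAt_comp_inner_gradient {ψ : E → ℝ} {x : ℝ → E} {v : E} {t : ℝ}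
    (hx : HasDerivAt x v t) (hψ : DifferentiableAt ℝ ψ (x t)) :
    HasDerivAt (fun s => ψ (x s)) (inner ℝ (gradient ψ (x t)) v) t := by
  simpa [Function.comp_def] using hψ.hasGradientAt.hasFDerivAt.comp_hasDerivAt t hx

lemma nonneg_along_of_inner_gradient_ge_neg_mul {F : E → E} {x : ℝ → E}
    (hsol : ∀ t ≥ (0 : ℝ), HasDerivAt x (F (x t)) t) {ψ : E → ℝ} (hψ : Differentiable ℝ ψ)
    {a : ℝ} (hcbf : ∀ t ≥ (0 : ℝ), -a * ψ (x t) ≤ inner ℝ (gradient ψ (x t)) (F (x t)))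
    (h0 : 0 ≤ ψ (x 0)) : ∀ t ≥ (0 : ℝ), 0 ≤ ψ (x t) :=
  nonneg_of_hasDerivAt_ge_neg_mul_s5
    (fun t ht => hasDerivAt_comp_inner_gradient (hsol t ht) (hψ (x t))) hcbf h0

end Trajectory

theorem hocbf_closed_loop_forward_invariant_general
    (n : ℕ) (F : EuclideanSpace ℝ (Fin n) → EuclideanSpace ℝ (Fin n))
    (ψ₀ : EuclideanSpace ℝ (Fin n) → ℝ) (hψ₀ : ContDiff ℝ 2 ψ₀)
    (a₁ a₂ : ℝ)
    (ψ₁ : EuclideanSpace ℝ (Fin n) → ℝ)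
    (hψ₁def : ∀ x, ψ₁ x = (inner ℝ (gradient ψ₀ x) (F x) : ℝ) + a₁ * ψ₀ x)
    (hψ₁smooth : ContDiff ℝ 1 ψ₁)
    (hcbf : ∀ x, (inner ℝ (gradient ψ₁ x) (F x) : ℝ) ≥ -a₂ * ψ₁ x)
    (x : ℝ → EuclideanSpace ℝ (Fin n))
    (hsol : ∀ t ≥ (0 : ℝ), HasDerivAt x (F (x t)) t)
    (hinit₀ : ψ₀ (x 0) ≥ 0) (hinit₁ : ψ₁ (x 0) ≥ 0) :
    ∀ t ≥ (0 : ℝ), ψ₀ (x t) ≥ 0 ∧ ψ₁ (x t) ≥ 0 := by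
  have hψ₁_nonneg : ∀ t ≥ (0 : ℝ), 0 ≤ ψ₁ (x t) :=
    nonneg_along_of_inner_gradient_ge_neg_mul hsol (hψ₁smooth.differentiable one_ne_zero)
      (fun t _ => hcbf (x t)) hinit₁
  have hψ₀_nonneg : ∀ t ≥ (0 : ℝ), 0 ≤ ψ₀ (x t) :=
    nonneg_along_of_inner_gradient_ge_neg_mul hsol (hψ₀.differentiable two_ne_zero)
      (a := a₁) (fun t ht => by linarith [hψ₁_nonneg t ht, hψ₁def (x t)]) hinit₀
  exact fun t ht => ⟨hψ₀_nonneg t ht, hψ₁_nonneg t ht⟩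

/-- Closed-loop ODE form of the high-order CBF theorem (Theorem 2 of the paper) with linear
class-`K∞` rates: with `ψ₁ x := ⟨∇ψ₀ x, F x⟩ + a₁·ψ₀ x` continuously differentiable and
`⟨∇ψ₁ x, F x⟩ ≥ -a₂·ψ₁ x` everywhere, the set `S⁰ ∩ S¹ = {ψ₀ ≥ 0} ∩ {ψ₁ ≥ 0}` is forward
invariant along `ẋ = F x`. -/
theorem hocbf_closed_loop_forward_invariant
    (n : ℕ) (F : EuclideanSpace ℝ (Fin n) → EuclideanSpace ℝ (Fin n))
    (K : NNReal) (hF : LipschitzWith K F)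
    (ψ₀ : EuclideanSpace ℝ (Fin n) → ℝ) (hψ₀ : ContDiff ℝ 2 ψ₀)
    (a₁ a₂ : ℝ) (ha₁ : 0 < a₁) (ha₂ : 0 < a₂)
    (ψ₁ : EuclideanSpace ℝ (Fin n) → ℝ)
    (hψ₁def : ∀ x, ψ₁ x = (inner ℝ (gradient ψ₀ x) (F x) : ℝ) + a₁ * ψ₀ x)
    (hψ₁smooth : ContDiff ℝ 1 ψ₁)
    (hcbf : ∀ x, (inner ℝ (gradient ψ₁ x) (F x) : ℝ) ≥ -a₂ * ψ₁ x)
    (x : ℝ → EuclideanSpace ℝ (Fin n))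
    (hsol : ∀ t ≥ (0 : ℝ), HasDerivAt x (F (x t)) t)
    (hinit₀ : ψ₀ (x 0) ≥ 0) (hinit₁ : ψ₁ (x 0) ≥ 0) :
    ∀ t ≥ (0 : ℝ), ψ₀ (x t) ≥ 0 ∧ ψ₁ (x t) ≥ 0 :=
  hocbf_closed_loop_forward_invariant_general n F ψ₀ hψ₀ a₁ a₂ ψ₁ hψ₁def hψ₁smooth hcbf x hsol
    hinit₀ hinit₁
end
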